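/- arXiv:2001.08634 — 2 statements merged into one kernel-verified Lean document; each statement's English description precedes it below -/
import Mathlib

section
/- Let n be a positive integer. Then |A_n| = 2 if and only if n has one of the following forms (with p, q primes): n = p^5; n = p^6; n = p q^2 with p < q; or n = p^2 q with p < q. In all of these cases A_n, being a two-element set, is in arithmetic progression: A_n = {p, p^2} when n = p^5, n = p^6, or n = p^2 q with p^2 < q; A_n = {p, q} when n = pq^2, or n = p^2 q with q < p^2. -/
set_option maxHeartbeats 1600000
/-- The set of nontrivial small divisors of `n`:
divisors `d` of `n` with `1 < d < √n` (equivalently `d ^ 2 < n`). -/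
def A (n : ℕ) : Finset ℕ := n.divisors.filter (fun d => 1 < d ∧ d ^ 2 < n)
lemma mem_A {n d : ℕ} : d ∈ A n ↔ d ∣ n ∧ 1 < d ∧ d ^ 2 < n := by
  unfold A
  simp only [Finset.mem_filter, Nat.mem_divisors]
  constructor
  · rintro ⟨⟨h1, _⟩, h2⟩; exact ⟨h1, h2⟩
  · rintro ⟨h1, h2, h3⟩
    exact ⟨⟨h1, by omega⟩, h2, h3⟩
lemma dvd_two_prime_pows {p q a b d : ℕ} (hp : p.Prime) (hq : q.Prime)
    (hd : d ∣ p ^ a * q ^ b) : ∃ i j, i ≤ a ∧ j ≤ b ∧ d = p ^ i * q ^ j := by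
  obtain ⟨u, v, hu, hv, rfl⟩ := exists_dvd_and_dvd_of_dvd_mul hd
  obtain ⟨i, hi, rfl⟩ := (Nat.dvd_prime_pow hp).mp hu
  obtain ⟨j, hj, rfl⟩ := (Nat.dvd_prime_pow hq).mp hv
  exact ⟨i, j, hi, hj, rfl⟩

-- no element b ≠ p can be in A (p*q) for primes p < q
lemma no_pq {p q b : ℕ} (hp : p.Prime) (hq : q.Prime) (hpq : p < q)
    (hb : b ∣ p * q) (hb1 : 1 < b) (hb2 : b ^ 2 < p * q) (hbp : b ≠ p) : False := by
  have hp2 := hp.two_le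
  have hq2 := hq.two_le
  rw [show p * q = p ^ 1 * q ^ 1 from by ring] at hb
  obtain ⟨i, j, hi, hj, rfl⟩ := dvd_two_prime_pows hp hq hb
  interval_cases i <;> interval_cases j <;>
    simp only [pow_zero, pow_one, one_mul, mul_one] at hb1 hb2 hbp <;>
    first
      | omega
      | nlinarith

lemma forward {n : ℕ} (h : (A n).card = 2) :
    (∃ p : ℕ, p.Prime ∧ (n = p ^ 5 ∨ n = p ^ 6)) ∨
    (∃ p q : ℕ, p.Prime ∧ q.Prime ∧ p < q ∧ (n = p * q ^ 2 ∨ n = p ^ 2 * q)) := by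
  -- basic setup
  obtain ⟨x, y, hxy, hAB⟩ := Finset.card_eq_two.mp h
  have hx : x ∈ A n := by rw [hAB]; simp
  obtain ⟨hxd, hx1, hx2⟩ := mem_A.mp hx
  have hn1 : 1 < n := by nlinarith
  set p := n.minFac with hpdef
  have hp : p.Prime := Nat.minFac_prime (by omega)
  have hpd : p ∣ n := Nat.minFac_dvd n
  have hp2 := hp.two_le
  have hpx : p ≤ x := Nat.minFac_le_of_dvd hx1 hxd
  have hpA : p ∈ A n := mem_A.mpr ⟨hpd, hp.one_lt, by nlinarith⟩
  have hpn : p ^ 2 < n := (mem_A.mp hpA).2.2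
  -- identify the second element b
  obtain ⟨b, hbA, hpb, hAB⟩ : ∃ b, b ∈ A n ∧ p ≠ b ∧ A n = {p, b} := by
    rw [hAB] at hpA ⊢
    simp only [Finset.mem_insert, Finset.mem_singleton] at hpA
    rcases hpA with rfl | rfl
    · exact ⟨y, by simp, hxy, rfl⟩
    · exact ⟨x, by simp, fun hh => hxy hh.symm, by rw [Finset.pair_comm]⟩
  obtain ⟨hbd, hb1, hb2⟩ := mem_A.mp hbA
  have memAB : ∀ d : ℕ, d ∣ n → 1 < d → d ^ 2 < n → d = p ∨ d = b := by
    intro d h1 h2 h3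
    have hd : d ∈ A n := mem_A.mpr ⟨h1, h2, h3⟩
    rw [hAB] at hd
    simpa using hd
  have hpb' : p < b := lt_of_le_of_ne (Nat.minFac_le_of_dvd hb1 hbd) hpb
  by_cases hsq : p ^ 2 ∣ n
  · -- case p^2 ∣ n
    rcases lt_trichotomy (p ^ 4) n with h4 | h4 | h4
    · -- p^2 ∈ A n, so b = p^2
      have hb' : b = p ^ 2 := by
        rcases memAB (p ^ 2) hsq (by nlinarith) (by nlinarith [pow_mul p 2 2]) with hh | hh
        · exfalso; nlinarith
        · exact hh.symm
      subst hb'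
      by_cases huniq : ∀ q : ℕ, q.Prime → q ∣ n → q = p
      · -- n is a power of p
        obtain ⟨k, hk⟩ : ∃ k, n = p ^ k := by
          refine ⟨n.primeFactorsList.length, ?_⟩
          exact Nat.eq_prime_pow_of_unique_prime_dvd (by omega) (fun hd hdvd => huniq _ hd hdvd)
        have hk5 : 5 ≤ k := by
          by_contra hc
          push_neg at hc
          have : n ≤ p ^ 4 := by
            rw [hk]
            exact Nat.pow_le_pow_right (by omega) (by omega)
          omega
        have hk6 : k ≤ 6 := by
          by_contra hc
          push_neg at hc
          have h3d : p ^ 3 ∣ n := hk ▸ pow_dvd_pow p (by omega)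
          have h3lt : (p ^ 3) ^ 2 < n := by
            rw [hk, ← pow_mul]
            exact Nat.pow_lt_pow_right hp.one_lt (by omega)
          rcases memAB (p ^ 3) h3d (by nlinarith) h3lt with hh | hh
          · nlinarith
          · nlinarith
        left
        exact ⟨p, hp, by interval_cases k <;> [left; right] <;> exact hk⟩
      · -- there is another prime q
        push_neg at huniq
        obtain ⟨q, hq, hqd, hqp⟩ := huniq
        have hq2 := hq.two_le
        have hpq : p < q := lt_of_le_of_ne (Nat.minFac_le_of_dvd hq.one_lt hqd) (Ne.symm hqp)
        have hqb : q ≠ p ^ 2 := by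
          intro hh
          have : p ∣ q := hh ▸ dvd_pow_self p two_ne_zero
          exact hqp ((Nat.prime_dvd_prime_iff_eq hp hq).mp this).symm
        have hqn : ¬ q ^ 2 < n := by
          intro hc
          rcases memAB q hqd hq.one_lt hc with hh | hh
          · omega
          · exact hqb hh
        push_neg at hqn
        have hcop : (p ^ 2).Coprime q := Nat.Coprime.pow_left _ ((Nat.coprime_primes hp hq).mpr (by omega))
        have hdvd : p ^ 2 * q ∣ n := hcop.mul_dvd_of_dvd_of_dvd hsq hqd
        obtain ⟨t, ht⟩ := hdvd
        have ht0 : 0 < t := by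
          rcases Nat.eq_zero_or_pos t with rfl | h
          · simp at ht; omega
          · exact h
        -- n ≤ q^2 and n = p^2 q t; in fact n < q^2 since p ∤ q
        have hne : n ≠ q ^ 2 := by
          intro hh
          have : p ∣ q ^ 2 := hh ▸ hpd
          have : p ∣ q := hp.dvd_of_dvd_pow this
          exact hqp ((Nat.prime_dvd_prime_iff_eq hp hq).mp this).symm
        have hlt : n < q ^ 2 := lt_of_le_of_ne hqn hne
        have hkey : p ^ 2 * t < q := by
          have h' : (p ^ 2 * t) * q < q * q := by
            calc (p ^ 2 * t) * q = n := by rw [ht]; ring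
            _ < q ^ 2 := hlt
            _ = q * q := sq q
          exact Nat.lt_of_mul_lt_mul_right h'
        have hd2 : p ^ 2 * t ∣ n := ⟨q, by rw [ht]; ring⟩
        have hgt1 : 1 < p ^ 2 * t := by
          have : p ^ 2 ≤ p ^ 2 * t := Nat.le_mul_of_pos_right _ ht0
          nlinarith
        have hsq2 : (p ^ 2 * t) ^ 2 < n := by
          calc (p ^ 2 * t) ^ 2 = (p ^ 2 * t) * (p ^ 2 * t) := sq _
          _ < (p ^ 2 * t) * q := (Nat.mul_lt_mul_left (show 0 < p ^ 2 * t by positivity)).mpr hkey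
          _ = n := by rw [ht]; ring
        rcases memAB (p ^ 2 * t) hd2 hgt1 hsq2 with hh | hh
        · exfalso
          have : p ^ 2 ≤ p ^ 2 * t := Nat.le_mul_of_pos_right _ ht0
          nlinarith
        · -- p^2 t = p^2 so t = 1
          have ht1 : t = 1 := by
            have hp2pos : 0 < p ^ 2 := by positivity
            have : p ^ 2 * t = p ^ 2 * 1 := by omega
            exact Nat.eq_of_mul_eq_mul_left hp2pos this
          right
          exact ⟨p, q, hp, hq, hpq, Or.inr (by rw [ht, ht1, mul_one])⟩
    · -- n = p^4 : contradiction since b would have to be p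
      exfalso
      obtain ⟨i, hi, rfl⟩ := (Nat.dvd_prime_pow hp).mp (show b ∣ p ^ 4 from h4 ▸ hbd)
      rw [← h4, ← pow_mul] at hb2
      have : i * 2 < 4 := (Nat.pow_lt_pow_iff_right hp.one_lt).mp hb2
      have hi1 : 1 ≤ i := by
        rcases Nat.eq_zero_or_pos i with rfl | hh
        · simp at hb1
        · exact hh
      have : i = 1 := by omega
      subst this
      simp at hpb
    · -- n < p^4, n = p^2 k with k < p^2
      obtain ⟨k, hk⟩ := hsq
      have hk1 : 1 < k := by nlinarith
      set r := k.minFac with hrdef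
      have hr : r.Prime := Nat.minFac_prime (by omega)
      have hrk : r ∣ k := Nat.minFac_dvd k
      have hrn : r ∣ n := hrk.trans ⟨p ^ 2, by rw [hk]; ring⟩
      have hpr : p ≤ r := Nat.minFac_le_of_dvd hr.two_le hrn
      obtain ⟨s, hs⟩ := hrk
      have hs1 : s = 1 := by
        by_contra hc
        have hs0 : 0 < s := by
          rcases Nat.eq_zero_or_pos s with rfl | hh
          · simp at hs; omega
          · exact hh
        have hs2 : 2 ≤ s := by omega
        have hsn : s ∣ n := (Dvd.intro_left r hs.symm).trans ⟨p ^ 2, by rw [hk]; ring⟩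
        have hps : p ≤ s := Nat.minFac_le_of_dvd hs2 hsn
        -- k = r s ≥ p^2, but k < p^2
        have : k < p ^ 2 := by nlinarith
        nlinarith [hs]
      rw [hs1, mul_one] at hs
      -- n = p^2 * r with p ≤ r < p^2
      have hkp2 : k < p ^ 2 := by nlinarith
      have hrp2 : r < p ^ 2 := by omega
      rcases eq_or_lt_of_le hpr with hreq | hpr'
      · -- n = p^3
        exfalso
        have hn3 : n = p ^ 3 := by rw [hk, hs, ← hreq]; ring
        obtain ⟨i, hi, rfl⟩ := (Nat.dvd_prime_pow hp).mp (show b ∣ p ^ 3 from hn3 ▸ hbd)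
        rw [hn3, ← pow_mul] at hb2
        have : i * 2 < 3 := (Nat.pow_lt_pow_iff_right hp.one_lt).mp hb2
        have hi1 : 1 ≤ i := by
          rcases Nat.eq_zero_or_pos i with rfl | hh
          · simp at hb1
          · exact hh
        have : i = 1 := by omega
        subst this
        simp at hpb
      · right
        exact ⟨p, r, hp, hr, hpr', Or.inr (by rw [hk, hs])⟩
  · -- case p^2 ∤ n
    obtain ⟨m, hm⟩ := id hpd
    have hpm : ¬ p ∣ m := by
      intro hc
      obtain ⟨u, rfl⟩ := hc
      exact hsq ⟨u, by rw [hm]; ring⟩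
    have hm1 : 1 < m := by nlinarith
    have hq : m.minFac.Prime := Nat.minFac_prime (by omega)
    set q := m.minFac with hqdef
    have hq2 := hq.two_le
    have hqm : q ∣ m := Nat.minFac_dvd m
    have hqn : q ∣ n := hqm.trans ⟨p, by rw [hm]; ring⟩
    have hqp : q ≠ p := fun hc => hpm (hc ▸ hqm)
    have hpq : p < q := lt_of_le_of_ne (Nat.minFac_le_of_dvd hq2 hqn) (Ne.symm hqp)
    have hnopq : n ≠ p * q := by
      intro hc
      exact no_pq hp hq hpq (hc ▸ hbd) hb1 (hc ▸ hb2) (fun hh => hpb hh.symm)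
    rcases lt_trichotomy (q ^ 2) n with hq2n | hq2n | hq2n
    · -- q ∈ A n, so b = q
      have hbq : b = q := by
        rcases memAB q hqn hq.one_lt hq2n with hh | hh
        · exact absurd hh hqp
        · exact hh.symm
      subst hbq
      have hcop : Nat.Coprime p q := (Nat.coprime_primes hp hq).mpr (by omega)
      obtain ⟨t, ht⟩ := hcop.mul_dvd_of_dvd_of_dvd hpd hqn
      have ht0 : 0 < t := by
        rcases Nat.eq_zero_or_pos t with rfl | hh
        · simp at ht; omega
        · exact hh
      have ht1 : 1 < t := by
        rcases Nat.lt_or_ge t 2 with hh | hh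
        · exfalso
          have : t = 1 := by omega
          rw [this, mul_one] at ht
          exact hnopq ht
        · omega
      rcases lt_trichotomy (t ^ 2) n with ht2 | ht2 | ht2
      · rcases memAB t ⟨p * q, by rw [ht]; ring⟩ ht1 ht2 with hh | hh
        · exfalso
          exact hsq ⟨q, by rw [ht, hh]; ring⟩
        · right
          exact ⟨p, q, hp, hq, hpq, Or.inl (by rw [ht, hh]; ring)⟩
      · exfalso
        have hpt : p ∣ t := hp.dvd_of_dvd_pow (show p ∣ t ^ 2 from ht2 ▸ hpd)
        obtain ⟨u, rfl⟩ := hpt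
        exact hsq ⟨u ^ 2, by rw [← ht2]; ring⟩
      · exfalso
        have hpbt : p * q < t := by
          have h' : (p * q) * t < t * t := by
            calc (p * q) * t = n := by rw [ht]
            _ < t ^ 2 := ht2
            _ = t * t := sq t
          have := Nat.lt_of_mul_lt_mul_right h'
          omega
        have hmem : (p * q) ^ 2 < n := by
          calc (p * q) ^ 2 = (p * q) * (p * q) := sq _
          _ < (p * q) * t := (Nat.mul_lt_mul_left (by positivity)).mpr hpbt
          _ = n := ht.symm
        rcases memAB (p * q) ⟨t, ht⟩ (by nlinarith) hmem with hh | hh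
        · nlinarith
        · nlinarith
    · exfalso
      have hpq2 : p ∣ q ^ 2 := hq2n ▸ hpd
      have : p ∣ q := hp.dvd_of_dvd_pow hpq2
      exact hqp ((Nat.prime_dvd_prime_iff_eq hp hq).mp this).symm
    · -- q^2 > n
      exfalso
      obtain ⟨w, hw⟩ := hqm
      have hw0 : 0 < w := by
        rcases Nat.eq_zero_or_pos w with rfl | hh
        · simp at hw; omega
        · exact hh
      have hw1 : w = 1 := by
        by_contra hc
        have hw2 : 2 ≤ w := by omega
        have hwm : w ∣ m := Dvd.intro_left q hw.symm
        have hwq : q ≤ w := Nat.minFac_le_of_dvd hw2 hwm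
        -- n = p*q*w ≥ 2*q*q > q^2 contradicts q^2 > n
        have : n = p * q * w := by rw [hm, hw]; ring
        nlinarith
      rw [hw1, mul_one] at hw
      exact hnopq (by rw [hm, hw])


lemma A_pq2 {p q : ℕ} (hp : p.Prime) (hq : q.Prime) (hpq : p < q) :
    A (p * q ^ 2) = {p, q} := by
  have hp2 := hp.two_le
  have hq2 := hq.two_le
  have key : p * q ^ 2 < q ^ 3 := by nlinarith
  have key2 : q ^ 3 ≤ q ^ 4 := Nat.pow_le_pow_right (by omega) (by omega)
  ext d
  rw [mem_A, Finset.mem_insert, Finset.mem_singleton]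
  constructor
  · rintro ⟨hd, h1, h2⟩
    rw [show p * q ^ 2 = p ^ 1 * q ^ 2 from by ring] at hd
    obtain ⟨i, j, hi, hj, rfl⟩ := dvd_two_prime_pows hp hq hd
    interval_cases i <;> interval_cases j <;>
      simp only [pow_zero, pow_one, one_mul, mul_one] at h1 h2 ⊢ <;>
      first
        | tauto
        | omega
        | (left; rfl)
        | (right; rfl)
        | (exfalso; nlinarith)
  · rintro (rfl | rfl)
    · exact ⟨dvd_mul_right _ _, hp.one_lt, by nlinarith⟩
    · exact ⟨dvd_mul_of_dvd_right (dvd_pow_self _ two_ne_zero) _, hq.one_lt, by nlinarith⟩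

lemma A_p2q_lt {p q : ℕ} (hp : p.Prime) (hq : q.Prime) (hpq : p < q) (h2 : p ^ 2 < q) :
    A (p ^ 2 * q) = {p, p ^ 2} := by
  have hp2 := hp.two_le
  have hq2 := hq.two_le
  ext d
  rw [mem_A, Finset.mem_insert, Finset.mem_singleton]
  constructor
  · rintro ⟨hd, h1, hlt⟩
    rw [show p ^ 2 * q = p ^ 2 * q ^ 1 from by ring] at hd
    obtain ⟨i, j, hi, hj, rfl⟩ := dvd_two_prime_pows hp hq hd
    interval_cases i <;> interval_cases j <;>
      simp only [pow_zero, pow_one, one_mul, mul_one] at h1 hlt ⊢ <;>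
      first
        | tauto
        | omega
        | (left; rfl)
        | (right; rfl)
        | (exfalso; nlinarith)
  · rintro (rfl | rfl)
    · refine ⟨dvd_mul_of_dvd_left (dvd_pow_self _ two_ne_zero) _, hp.one_lt, by nlinarith⟩
    · exact ⟨dvd_mul_right _ _, by nlinarith, by nlinarith⟩

lemma A_p2q_gt {p q : ℕ} (hp : p.Prime) (hq : q.Prime) (hpq : p < q) (h2 : q < p ^ 2) :
    A (p ^ 2 * q) = {p, q} := by
  have hp2 := hp.two_le
  have hq2 := hq.two_le
  ext d
  rw [mem_A, Finset.mem_insert, Finset.mem_singleton]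
  constructor
  · rintro ⟨hd, h1, hlt⟩
    rw [show p ^ 2 * q = p ^ 2 * q ^ 1 from by ring] at hd
    obtain ⟨i, j, hi, hj, rfl⟩ := dvd_two_prime_pows hp hq hd
    interval_cases i <;> interval_cases j <;>
      simp only [pow_zero, pow_one, one_mul, mul_one] at h1 hlt ⊢ <;>
      first
        | tauto
        | omega
        | (left; rfl)
        | (right; rfl)
        | (exfalso; nlinarith)
  · rintro (rfl | rfl)
    · refine ⟨dvd_mul_of_dvd_left (dvd_pow_self _ two_ne_zero) _, hp.one_lt, by nlinarith⟩
    · exact ⟨dvd_mul_left _ _, hq.one_lt, by nlinarith⟩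


lemma A_prime_pow {p e : ℕ} (hp : p.Prime) (he : 5 ≤ e) (he' : e ≤ 6) :
    A (p ^ e) = {p, p ^ 2} := by
  have hp1 := hp.one_lt
  ext d
  rw [mem_A, Finset.mem_insert, Finset.mem_singleton]
  constructor
  · rintro ⟨hd, h1, h2⟩
    obtain ⟨i, hi, rfl⟩ := (Nat.dvd_prime_pow hp).mp hd
    rw [← pow_mul] at h2
    have h2i : i * 2 < e := (Nat.pow_lt_pow_iff_right hp1).mp h2
    have hi1 : 1 ≤ i := by
      rcases Nat.eq_zero_or_pos i with rfl | h
      · simp at h1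
      · exact h
    have : i = 1 ∨ i = 2 := by omega
    rcases this with rfl | rfl
    · left; exact pow_one p
    · right; rfl
  · have hlt : ∀ i, 1 ≤ i → i ≤ 2 → p ^ i ∣ p ^ e ∧ 1 < p ^ i ∧ (p ^ i) ^ 2 < p ^ e := by
      intro i h1 h2
      refine ⟨pow_dvd_pow p (by omega), Nat.one_lt_pow (by omega) hp1, ?_⟩
      have : (p ^ i) ^ 2 = p ^ (i * 2) := by ring
      rw [this]
      exact Nat.pow_lt_pow_right hp1 (by omega)
    rintro (rfl | rfl)
    · simpa using hlt 1 le_rfl (by omega)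
    · exact hlt 2 (by omega) le_rfl

/-- A finite set `S` of positive integers is in arithmetic progression if there are
positive integers `d` (first term) and `a` (common difference) with
`S = {d + i·a : 0 ≤ i ≤ |S| − 1}`. -/
def IsAP (S : Finset ℕ) : Prop :=
  ∃ d a : ℕ, 0 < d ∧ 0 < a ∧ S = (Finset.range S.card).image (fun i => d + i * a)

lemma pair_eq_image {a b : ℕ} (hab : a < b) :
    ({a, b} : Finset ℕ) = (Finset.range 2).image (fun i => a + i * (b - a)) := by
  rw [show Finset.range 2 = {0, 1} from by decide]
  rw [Finset.image_insert, Finset.image_singleton]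
  congr 1
  · omega
  · congr 1
    omega

lemma isAP_of_card_two {S : Finset ℕ} (h2 : S.card = 2) (hpos : ∀ x ∈ S, 0 < x) :
    IsAP S := by
  obtain ⟨a, b, hab, hS⟩ := Finset.card_eq_two.mp h2
  rcases lt_or_gt_of_ne hab with hlt | hlt
  · refine ⟨a, b - a, hpos a (by rw [hS]; simp), by omega, ?_⟩
    rw [h2, hS]
    exact pair_eq_image hlt
  · refine ⟨b, a - b, hpos b (by rw [hS]; simp), by omega, ?_⟩
    rw [h2, hS, Finset.pair_comm]
    exact pair_eq_image hlt

theorem statement_12 (n : ℕ) (hn : 0 < n) :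
    ((A n).card = 2 ↔
      (∃ p : ℕ, p.Prime ∧ (n = p ^ 5 ∨ n = p ^ 6)) ∨
      (∃ p q : ℕ, p.Prime ∧ q.Prime ∧ p < q ∧ (n = p * q ^ 2 ∨ n = p ^ 2 * q))) ∧
    ((A n).card = 2 → IsAP (A n)) ∧
    (∀ p : ℕ, p.Prime → (n = p ^ 5 ∨ n = p ^ 6) → A n = {p, p ^ 2}) ∧
    (∀ p q : ℕ, p.Prime → q.Prime → p < q → n = p ^ 2 * q → p ^ 2 < q →
      A n = {p, p ^ 2}) ∧
    (∀ p q : ℕ, p.Prime → q.Prime → p < q → n = p * q ^ 2 → A n = {p, q}) ∧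
    (∀ p q : ℕ, p.Prime → q.Prime → p < q → n = p ^ 2 * q → q < p ^ 2 →
      A n = {p, q}) := by
  refine ⟨⟨fun h => forward h, ?_⟩, ?_, ?_, ?_, ?_, ?_⟩
  · rintro (⟨p, hp, hcase⟩ | ⟨p, q, hp, hq, hpq, hcase⟩)
    · have hA : A n = {p, p ^ 2} := by
        rcases hcase with rfl | rfl
        · exact A_prime_pow hp (by omega) (by omega)
        · exact A_prime_pow hp (by omega) le_rfl
      rw [hA]
      have hp2 := hp.two_le
      exact Finset.card_pair (by nlinarith)
    · have hq2 := hq.two_le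
      rcases hcase with rfl | rfl
      · rw [A_pq2 hp hq hpq]
        exact Finset.card_pair (by omega)
      · have hne : q ≠ p ^ 2 := by
          intro hh
          have : p ∣ q := hh ▸ dvd_pow_self p two_ne_zero
          have := ((Nat.prime_dvd_prime_iff_eq hp hq).mp this)
          omega
        rcases lt_or_gt_of_ne hne with hlt | hlt
        · rw [A_p2q_gt hp hq hpq hlt]
          exact Finset.card_pair (by omega)
        · rw [A_p2q_lt hp hq hpq hlt]
          have hp2 := hp.two_le
          exact Finset.card_pair (by nlinarith)
  · intro h
    exact isAP_of_card_two h (fun x hx => by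
      have := (mem_A.mp hx).2.1
      omega)
  · intro p hp hcase
    rcases hcase with rfl | rfl
    · exact A_prime_pow hp (by omega) (by omega)
    · exact A_prime_pow hp (by omega) le_rfl
  · intro p q hp hq hpq hn2 hlt
    subst hn2
    exact A_p2q_lt hp hq hpq hlt
  · intro p q hp hq hpq hn2
    subst hn2
    exact A_pq2 hp hq hpq
  · intro p q hp hq hpq hn2 hlt
    subst hn2
    exact A_p2q_gt hp hq hpq hlt
end

section
/- Let p < q be primes and let n = p^3 q. If A_n is in arithmetic progression, then n = 24 (i.e., p = 2 and q = 3), in which case A_n = {2, 3, 4}. -/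
lemma mem_A_iff {n d : ℕ} (hn : n ≠ 0) : d ∈ A n ↔ d ∣ n ∧ 1 < d ∧ d ^ 2 < n := by
  simp [A, Nat.mem_divisors, hn, and_assoc]

lemma ap_three (x y z : ℕ) (hxy : x < y) (hyz : y < z)
    (h : IsAP ({x, y, z} : Finset ℕ)) : x + z = 2 * y := by
  obtain ⟨d, a, hd, ha, hs⟩ := h
  have hcard : ({x, y, z} : Finset ℕ).card = 3 := by
    rw [Finset.card_insert_of_notMem (by simp; omega),
      Finset.card_insert_of_notMem (by simp; omega), Finset.card_singleton]
  rw [hcard] at hs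
  have m0 : d ∈ ({x, y, z} : Finset ℕ) := by
    rw [hs]; exact Finset.mem_image.2 ⟨0, by simp, by simp⟩
  have m1 : d + a ∈ ({x, y, z} : Finset ℕ) := by
    rw [hs]; exact Finset.mem_image.2 ⟨1, by simp, by simp⟩
  have m2 : d + 2 * a ∈ ({x, y, z} : Finset ℕ) := by
    rw [hs]; exact Finset.mem_image.2 ⟨2, by simp, by ring⟩
  simp only [Finset.mem_insert, Finset.mem_singleton] at m0 m1 m2
  omega

lemma dvd_classify (p q d : ℕ) (hp : p.Prime) (hq : q.Prime) (hpq : p ≠ q)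
    (hd : d ∣ p ^ 3 * q) : ∃ j ≤ 3, d = p ^ j ∨ d = p ^ j * q := by
  obtain ⟨a, b, ha, hb, rfl⟩ := exists_dvd_and_dvd_of_dvd_mul hd
  obtain ⟨j, hj, rfl⟩ := (Nat.dvd_prime_pow hp).1 ha
  rcases (Nat.dvd_prime hq).1 hb with rfl | rfl
  · exact ⟨j, hj, Or.inl (mul_one _)⟩
  · exact ⟨j, hj, Or.inr rfl⟩

theorem statement_14 (p q : ℕ) (hp : p.Prime) (hq : q.Prime) (hpq : p < q)
    (h : IsAP (A (p ^ 3 * q))) :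
    p = 2 ∧ q = 3 ∧ p ^ 3 * q = 24 ∧ A (p ^ 3 * q) = ({2, 3, 4} : Finset ℕ) := by
  have hp2 : 2 ≤ p := hp.two_le
  have hq3 : 3 ≤ q := by omega
  have hne : p ≠ q := ne_of_lt hpq
  have hn : p ^ 3 * q ≠ 0 := by positivity
  have hpdvd : ∀ m : ℕ, p ∣ m → q ≠ m → q.Prime → True := fun _ _ _ _ => trivial
  have hq_ne_pow : ∀ k, 2 ≤ k → q ≠ p ^ k := by
    intro k hk hqe
    have : p ∣ q := hqe ▸ dvd_pow_self p (by omega)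
    exact hne ((Nat.prime_dvd_prime_iff_eq hp hq).1 this)
  have hq_ne_p3 : q ≠ p ^ 3 := hq_ne_pow 3 (by omega)
  -- basic inequalities
  have hpp : p < p ^ 2 := by nlinarith
  have hpp3 : p ^ 2 < p ^ 3 := by nlinarith
  rcases lt_or_gt_of_ne hq_ne_p3 with hlt | hgt
  · -- q < p ^ 3 : A = {p, p^2, q}
    have hA : ∀ d, d ∈ A (p ^ 3 * q) ↔ d = p ∨ d = p ^ 2 ∨ d = q := by
      intro d
      rw [mem_A_iff hn]
      constructor
      · rintro ⟨hd, h1, h2⟩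
        obtain ⟨j, hj, rfl | rfl⟩ := dvd_classify p q _ hp hq hne hd
        · interval_cases j
          · simp at h1
          · simp
          · simp
          · exfalso; nlinarith [h2]
        · rcases Nat.eq_zero_or_pos j with rfl | hj1
          · simp
          · exfalso
            have hpj : p ≤ p ^ j := Nat.le_self_pow (by omega) p
            have e1 : (p * q) ^ 2 ≤ (p ^ j * q) ^ 2 :=
              Nat.pow_le_pow_left (Nat.mul_le_mul_right q hpj) 2
            have e2 : p ^ 3 * q < (p * q) ^ 2 := by nlinarith [hpq, hp2, hq3]
            omega
      · have hq2 : q ^ 2 < p ^ 3 * q := by nlinarith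
        rintro (h' | h' | h') <;> rw [h']
        · exact ⟨dvd_mul_of_dvd_left (dvd_pow_self p (by norm_num)) q, by omega, by nlinarith⟩
        · exact ⟨dvd_mul_of_dvd_left (pow_dvd_pow p (by norm_num)) q, by nlinarith, by nlinarith⟩
        · exact ⟨dvd_mul_left q _, by omega, hq2⟩
    have hq_ne_p2 : q ≠ p ^ 2 := hq_ne_pow 2 le_rfl
    rcases lt_or_gt_of_ne hq_ne_p2 with hlt2 | hgt2
    · -- p < q < p^2 : AP gives p + p^2 = 2q
      have hset : A (p ^ 3 * q) = ({p, q, p ^ 2} : Finset ℕ) := by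
        ext d; rw [hA]; simp [Finset.mem_insert]; tauto
      have key : p + p ^ 2 = 2 * q := ap_three p q (p ^ 2) hpq hlt2 (hset ▸ h)
      -- p ∣ 2q, so p = 2 (else p ∣ q)
      have hpd : p ∣ 2 * q := ⟨1 + p, by
        have h9 : p * (1 + p) = p + p ^ 2 := by ring
        omega⟩
      have hp2' : p = 2 := by
        rcases (Nat.Prime.dvd_mul hp).1 hpd with h2 | hq'
        · exact (Nat.prime_dvd_prime_iff_eq hp Nat.prime_two).1 h2
        · exact absurd ((Nat.prime_dvd_prime_iff_eq hp hq).1 hq') hne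
      subst hp2'
      have hq' : q = 3 := by omega
      subst hq'
      refine ⟨rfl, rfl, by norm_num, ?_⟩
      show A 24 = _
      decide
    · -- p^2 < q : AP gives p + q = 2 p^2, so q = p(2p-1), p ∣ q, contradiction
      exfalso
      have hset : A (p ^ 3 * q) = ({p, p ^ 2, q} : Finset ℕ) := by
        ext d; rw [hA]; simp [Finset.mem_insert]
      have key : p + q = 2 * p ^ 2 := ap_three p (p ^ 2) q hpp hgt2 (hset ▸ h)
      have hpd : p ∣ q := ⟨2 * p - 1, by
        have h1 : p * (2 * p - 1) = 2 * (p * p) - p := by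
          rw [Nat.mul_sub, mul_one]; ring_nf
        have h2 : p ^ 2 = p * p := by ring
        omega⟩
      exact hne ((Nat.prime_dvd_prime_iff_eq hp hq).1 hpd)
  · -- p^3 < q : A = {p, p^2, p^3}, never an AP
    exfalso
    have hA : ∀ d, d ∈ A (p ^ 3 * q) ↔ d = p ∨ d = p ^ 2 ∨ d = p ^ 3 := by
      intro d
      rw [mem_A_iff hn]
      constructor
      · rintro ⟨hd, h1, h2⟩
        obtain ⟨j, hj, rfl | rfl⟩ := dvd_classify p q _ hp hq hne hd
        · interval_cases j
          · simp at h1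
          · simp
          · simp
          · simp
        · exfalso
          have hpj : 1 ≤ p ^ j := Nat.one_le_pow _ _ (by omega)
          have e1 : q ^ 2 ≤ (p ^ j * q) ^ 2 :=
            Nat.pow_le_pow_left (Nat.le_mul_of_pos_left q hpj) 2
          have e2 : p ^ 3 * q < q ^ 2 := by nlinarith [hgt, hq3]
          omega
      · rintro (h' | h' | h') <;> rw [h']
        · exact ⟨dvd_mul_of_dvd_left (dvd_pow_self p (by norm_num)) q, by omega, by nlinarith⟩
        · exact ⟨dvd_mul_of_dvd_left (pow_dvd_pow p (by norm_num)) q, by nlinarith, by nlinarith⟩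
        · exact ⟨dvd_mul_right _ q, by nlinarith, by nlinarith⟩
    have hset : A (p ^ 3 * q) = ({p, p ^ 2, p ^ 3} : Finset ℕ) := by
      ext d; rw [hA]; simp [Finset.mem_insert]
    have key : p + p ^ 3 = 2 * p ^ 2 := ap_three p (p ^ 2) (p ^ 3) hpp hpp3 (hset ▸ h)
    nlinarith [key]
end
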